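/- Define Λ_L(D_N) = E[X*(X D_N X*)^{-1} X] where X is an L×N standard complex Gaussian matrix, D_N an N×N positive diagonal matrix, and 1 ≤ L ≤ N. Then the functional equation D_N Λ_L(D_N) + D_N^{-1} Λ_{N−L}(D_N^{-1}) = I_N holds, where Λ_{N−L}(D_N^{-1}) = E[Ω_2*(Ω_2* D_N^{-1} Ω_2)^{-1}Ω_2*] is defined via a Haar-distributed N×(N−L) matrix Ω_2 with orthonormal columns (with the convention Λ_0 = 0 when L = N). -/

import Mathlib

open Matrix MeasureTheory BigOperators

noncomputable instance matrixMeasurableSpace (m n : Type*) :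
    MeasurableSpace (Matrix m n ℂ) :=
  (inferInstance : MeasurableSpace (m → n → ℂ))

/-- Entrywise expectation of a random matrix. -/
noncomputable def matExp {Ω : Type*} [MeasurableSpace Ω] (μ : Measure Ω)
    {m n : Type*} (F : Ω → Matrix m n ℂ) : Matrix m n ℂ :=
  Matrix.of fun i j => ∫ ω, F ω i j ∂μ

/-!
If `A` and `B` are complementary column blocks of a unitary matrix, then `A (Aᴴ D A)⁻¹ Aᴴ D` and
`D⁻¹ B (Bᴴ D⁻¹ B)⁻¹ Bᴴ` are the `D`-orthogonal projections onto the column space of `A` and onto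
its `D`-orthogonal complement `D⁻¹ (range B)`, so they add up to `1`.

The laws of `Φᴴ` and of `Ω₂` are unitarily invariant probability measures on Stiefel manifolds,
and a Stiefel manifold is a single orbit of the unitary group. Hence `Φᴴ` and `Ω₂` are distributed
as the two complementary column blocks of one Haar unitary matrix, and integrating the pointwise
identity gives `Λ_L D + D⁻¹ Λ_{N-L} = 1`. Finally `Λ_L` is invariant under conjugation by the
coordinate sign flips, which commute with `D`; so `Λ_L` is diagonal and commutes with `D`.
-/

open ProbabilityTheory

namespace Matrix

instance {m n R : Type*} [Countable m] [Countable n] [TopologicalSpace R]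
    [SecondCountableTopology R] : SecondCountableTopology (Matrix m n R) :=
  inferInstanceAs (SecondCountableTopology (m → n → R))

instance {m n : Type*} [Countable m] [Countable n] : BorelSpace (Matrix m n ℂ) :=
  Pi.borelSpace

section Measurability

variable {α : Type*} [MeasurableSpace α]

theorem measurable_entry {m n : Type*} {F : α → Matrix m n ℂ} (hF : Measurable F) (i : m)
    (j : n) : Measurable fun a => F a i j :=
  (hF.eval (a := i)).eval

theorem _root_.Measurable.matrix_conjTranspose {m n : Type*} [Finite m] [Finite n]
    {F : α → Matrix m n ℂ} (hF : Measurable F) : Measurable fun a => (F a)ᴴ :=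
  continuous_id.matrix_conjTranspose.measurable.comp hF

theorem _root_.Measurable.matrix_mul {l m n : Type*} [Fintype m] [Finite l] [Finite n]
    {F : α → Matrix l m ℂ} {G : α → Matrix m n ℂ} (hF : Measurable F) (hG : Measurable G) :
    Measurable fun a => F a * G a :=
  (continuous_fst.matrix_mul continuous_snd).measurable2 hF hG

theorem measurable_nonsing_inv {n : Type*} [Fintype n] [DecidableEq n] :
    Measurable fun A : Matrix n n ℂ => A⁻¹ := by
  simp_rw [inv_def, Ring.inverse_eq_inv']
  exact (continuous_fst.smul continuous_snd).measurable2
    continuous_id.matrix_det.measurable.inv continuous_id.matrix_adjugate.measurable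

end Measurability

section WeightedProj

open scoped ComplexOrder

variable {𝕜 : Type*} [RCLike 𝕜] {n k m : Type*} [Fintype n] [Fintype k] [DecidableEq k]

/-- `weightedProj D X * D` is the `D`-orthogonal projection onto the column space of `X`. -/
noncomputable def weightedProj (D : Matrix n n 𝕜) (X : Matrix n k 𝕜) : Matrix n n 𝕜 :=
  X * (Xᴴ * D * X)⁻¹ * Xᴴ

theorem weightedProj_conjTranspose (D : Matrix n n 𝕜) (X : Matrix k n 𝕜) :
    weightedProj D Xᴴ = Xᴴ * (X * D * Xᴴ)⁻¹ * X := by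
  rw [weightedProj, conjTranspose_conjTranspose]

theorem weightedProj_mul_left {D Θ : Matrix n n 𝕜} (hΘ : Θᴴ * D * Θ = D) (X : Matrix n k 𝕜) :
    weightedProj D (Θ * X) = Θ * weightedProj D X * Θᴴ := by
  have h : (Θ * X)ᴴ * D * (Θ * X) = Xᴴ * D * X := calc
    (Θ * X)ᴴ * D * (Θ * X) = Xᴴ * (Θᴴ * D * Θ) * X := by
      simp only [conjTranspose_mul, Matrix.mul_assoc]
    _ = Xᴴ * D * X := by rw [hΘ]
  rw [weightedProj, h, weightedProj, conjTranspose_mul]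
  simp only [Matrix.mul_assoc]

theorem isUnit_det_conjTranspose_mul_mul {D : Matrix n n 𝕜} (hD : D.PosDef) {A : Matrix n k 𝕜}
    (hA : Aᴴ * A = 1) : IsUnit (Aᴴ * D * A).det := by
  refine (isUnit_iff_isUnit_det _).mp (hD.conjTranspose_mul_mul_same fun x y hxy => ?_).isUnit
  simpa [hA] using congrArg (Aᴴ *ᵥ ·) hxy

theorem posDef_diagonal_ofReal {ι : Type*} [DecidableEq ι] {d : ι → ℝ} (hd : ∀ i, 0 < d i) :
    (diagonal fun i => (d i : 𝕜)).PosDef :=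
  posDef_diagonal_iff.2 fun i => RCLike.ofReal_pos.2 (hd i)

theorem conjTranspose_mul_sub_mul_weightedProj_mul {D : Matrix n n 𝕜} {A : Matrix n k 𝕜}
    (hA : IsUnit (Aᴴ * D * A).det) : Aᴴ * (D - D * weightedProj D A * D) = 0 := calc
  _ = Aᴴ * D - (Aᴴ * D * A * (Aᴴ * D * A)⁻¹) * Aᴴ * D := by
    simp only [weightedProj, Matrix.mul_sub, Matrix.mul_assoc]
  _ = 0 := by rw [mul_nonsing_inv _ hA, Matrix.one_mul, sub_self]

theorem sub_mul_weightedProj_mul_mul {D : Matrix n n 𝕜} {A : Matrix n k 𝕜}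
    (hA : IsUnit (Aᴴ * D * A).det) : (D - D * weightedProj D A * D) * A = 0 := calc
  _ = D * A - D * A * ((Aᴴ * D * A)⁻¹ * (Aᴴ * D * A)) := by
    simp only [weightedProj, Matrix.sub_mul, Matrix.mul_assoc]
  _ = 0 := by rw [nonsing_inv_mul _ hA, Matrix.mul_one, sub_self]

variable [DecidableEq n] [Fintype m] [DecidableEq m]

theorem weightedProj_inv_eq_sub {D : Matrix n n 𝕜} (hD : D.PosDef) {A : Matrix n k 𝕜}
    {B : Matrix n m 𝕜} (hW : (fromCols A B)ᴴ * fromCols A B = 1)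
    (hW' : fromCols A B * (fromCols A B)ᴴ = 1) :
    weightedProj D⁻¹ B = D - D * weightedProj D A * D := by
  rw [conjTranspose_fromCols_eq_fromRows_conjTranspose, fromRows_mul_fromCols,
    ← fromBlocks_one, fromBlocks_inj] at hW
  obtain ⟨hA, -, hBA, hB⟩ := hW
  rw [conjTranspose_fromCols_eq_fromRows_conjTranspose, fromCols_mul_fromRows] at hW'
  have hBB : B * Bᴴ = 1 - A * Aᴴ := eq_sub_of_add_eq' hW'
  have hADA := isUnit_det_conjTranspose_mul_mul hD hA
  -- `Z` lives on the column space of `B`, where `Bᴴ Z B` inverts `Bᴴ D⁻¹ B`.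
  set Z := D - D * weightedProj D A * D
  have hAZ : Aᴴ * Z = 0 := conjTranspose_mul_sub_mul_weightedProj_mul hADA
  have hZA : Z * A = 0 := sub_mul_weightedProj_mul_mul hADA
  have hBZB : Bᴴ * D⁻¹ * Z * B = 1 := calc
    Bᴴ * D⁻¹ * Z * B =
        Bᴴ * (D⁻¹ * D) * B - Bᴴ * (D⁻¹ * D) * A * (Aᴴ * D * A)⁻¹ * (Aᴴ * D * B) := by
      simp only [Z, weightedProj, Matrix.mul_sub, Matrix.sub_mul, Matrix.mul_assoc]
    _ = 1 := by
      rw [nonsing_inv_mul D ((isUnit_iff_isUnit_det D).mp hD.isUnit), Matrix.mul_one, hB, hBA,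
        Matrix.zero_mul, Matrix.zero_mul, sub_zero]
  have hinv : (Bᴴ * D⁻¹ * B)⁻¹ = Bᴴ * Z * B := by
    refine inv_eq_right_inv ?_
    calc Bᴴ * D⁻¹ * B * (Bᴴ * Z * B) = Bᴴ * D⁻¹ * (B * Bᴴ) * Z * B := by
          simp only [Matrix.mul_assoc]
      _ = Bᴴ * D⁻¹ * Z * B - Bᴴ * D⁻¹ * A * (Aᴴ * Z) * B := by
          rw [hBB]; simp only [Matrix.mul_sub, Matrix.sub_mul, Matrix.mul_one, Matrix.mul_assoc]
      _ = 1 := by rw [hAZ, hBZB, Matrix.mul_zero, Matrix.zero_mul, sub_zero]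
  calc weightedProj D⁻¹ B = (B * Bᴴ) * Z * (B * Bᴴ) := by
        rw [weightedProj, hinv]; simp only [Matrix.mul_assoc]
    _ = Z := by
        rw [hBB]
        simp only [Matrix.sub_mul, Matrix.mul_sub, Matrix.one_mul, Matrix.mul_one,
          Matrix.mul_assoc, hAZ, ← Matrix.mul_assoc Z A, hZA, Matrix.zero_mul, Matrix.mul_zero,
          sub_zero]

theorem weightedProj_mul_add_inv_mul_weightedProj_inv {D : Matrix n n 𝕜} (hD : D.PosDef)
    {A : Matrix n k 𝕜} {B : Matrix n m 𝕜} (hW : (fromCols A B)ᴴ * fromCols A B = 1)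
    (hW' : fromCols A B * (fromCols A B)ᴴ = 1) :
    weightedProj D A * D + D⁻¹ * weightedProj D⁻¹ B = 1 := by
  rw [weightedProj_inv_eq_sub hD hW hW', Matrix.mul_sub, ← Matrix.mul_assoc, ← Matrix.mul_assoc,
    nonsing_inv_mul D ((isUnit_iff_isUnit_det D).mp hD.isUnit), Matrix.one_mul]
  abel

theorem weightedProj_submatrix_mul_add_inv_mul_weightedProj_inv_submatrix {D : Matrix n n 𝕜}
    (hD : D.PosDef) {U : Matrix n n 𝕜} (hU : U ∈ unitaryGroup n 𝕜) (e : k ⊕ m ≃ n) :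
    weightedProj D (U.submatrix id (e ∘ Sum.inl)) * D +
      D⁻¹ * weightedProj D⁻¹ (U.submatrix id (e ∘ Sum.inr)) = 1 := by
  have hW : fromCols (U.submatrix id (e ∘ Sum.inl)) (U.submatrix id (e ∘ Sum.inr)) =
      U.submatrix id e := by
    ext i (j | j) <;> rfl
  apply weightedProj_mul_add_inv_mul_weightedProj_inv hD <;> rw [hW, conjTranspose_submatrix]
  · rw [← submatrix_mul _ _ _ _ _ Function.bijective_id, ← star_eq_conjTranspose,
      mem_unitaryGroup_iff'.1 hU, submatrix_one_equiv]
  · rw [← submatrix_mul _ _ _ _ _ e.bijective, ← star_eq_conjTranspose,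
      mem_unitaryGroup_iff.1 hU, submatrix_id_id]

end WeightedProj

section UnitaryGroup

variable {n k : Type*} [Fintype n] [DecidableEq n]

instance {R : Type*} [CommRing R] [StarRing R] : MulAction (unitaryGroup n R) (Matrix n k R) where
  smul U X := (U : Matrix n n R) * X
  one_smul := Matrix.one_mul
  mul_smul U V X := Matrix.mul_assoc (U : Matrix n n R) V X

theorem UnitaryGroup.smul_def {R : Type*} [CommRing R] [StarRing R] (U : unitaryGroup n R)
    (X : Matrix n k R) : U • X = (U : Matrix n n R) * X :=
  rfl

theorem UnitaryGroup.smul_one_submatrix {R : Type*} [CommRing R] [StarRing R]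
    (U : unitaryGroup n R) (f : k → n) :
    U • (1 : Matrix n n R).submatrix id f = (U : Matrix n n R).submatrix id f :=
  mul_submatrix_one (Equiv.refl n) f (U : Matrix n n R)

instance : CompactSpace (unitaryGroup n ℂ) :=
  isCompact_iff_compactSpace.mp <|
    (isCompact_univ_pi fun _ => isCompact_univ_pi fun _ => isCompact_closedBall (0 : ℂ) 1)
      |>.of_isClosed_subset (isClosed_unitary (R := Matrix n n ℂ))
        fun _ hU i _ j _ => mem_closedBall_zero_iff.2 (entry_norm_bound_of_unitary hU i j)

instance [Finite k] : MeasurableSMul₂ (unitaryGroup n ℂ) (Matrix n k ℂ) :=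
  ⟨(continuous_subtype_val.comp continuous_fst |>.matrix_mul continuous_snd).measurable⟩

theorem mem_orbit_one_submatrix_of_conjTranspose_mul_self [DecidableEq k] {f : k → n}
    (hf : Function.Injective f) {X : Matrix n k ℂ} (hX : Xᴴ * X = 1) :
    X ∈ MulAction.orbit (unitaryGroup n ℂ) ((1 : Matrix n n ℂ).submatrix id f) := by
  let v : k → EuclideanSpace ℂ n := fun j => WithLp.toLp 2 fun i => X i j
  have hv : Orthonormal ℂ v := by
    rw [orthonormal_iff_ite]
    intro j j'
    simpa [v, PiLp.inner_apply, Matrix.mul_apply, one_apply, mul_comm] using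
      congrFun (congrFun hX j) j'
  let w : n → EuclideanSpace ℂ n := Function.extend f v 0
  have hw : Orthonormal ℂ ((Set.range f).domRestrict w) := by
    convert hv.comp _ (Equiv.ofInjective f hf).symm.injective
    ext ⟨_, j, rfl⟩ : 1
    simp [Set.domRestrict_apply, w, hf.extend_apply]
  obtain ⟨b, hb⟩ := hw.exists_orthonormalBasis_extension_of_card_eq (by simp)
  refine ⟨⟨_, (EuclideanSpace.basisFun n ℂ).toMatrix_orthonormalBasis_mem_unitary b⟩, ?_⟩
  show _ • _ = X
  rw [UnitaryGroup.smul_one_submatrix]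
  ext i j
  simp [Module.Basis.toMatrix_apply, hb (f j) ⟨j, rfl⟩, w, hf.extend_apply, v]

variable (𝕜 : Type*) [RCLike 𝕜]

def signFlip (i : n) : unitaryGroup n 𝕜 :=
  ⟨diagonal (Function.update 1 i (-1)), by
    rw [mem_unitaryGroup_iff, star_eq_conjTranspose, diagonal_conjTranspose,
      diagonal_mul_diagonal, ← diagonal_one]
    congr 1
    funext j
    by_cases h : j = i <;> simp [h]⟩

variable {𝕜}

theorem signFlip_conjTranspose_mul_diagonal_mul (i : n) (d : n → 𝕜) :
    (signFlip 𝕜 i : Matrix n n 𝕜)ᴴ * diagonal d * (signFlip 𝕜 i : Matrix n n 𝕜) = diagonal d := by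
  simp only [signFlip, diagonal_conjTranspose, diagonal_mul_diagonal]
  congr 1
  funext j
  by_cases h : j = i <;> simp [h]

theorem commute_diagonal_of_forall_signFlip {M : Matrix n n 𝕜}
    (hM : ∀ i : n, (signFlip 𝕜 i : Matrix n n 𝕜) * M * (signFlip 𝕜 i : Matrix n n 𝕜)ᴴ = M)
    (d : n → 𝕜) : Commute (diagonal d) M := by
  have hoff : ∀ i j, i ≠ j → M i j = 0 := fun i j hij => by
    have h := congrFun (congrFun (hM i) i) j
    simp [signFlip, diagonal_conjTranspose, diagonal_mul, mul_diagonal, Ne.symm hij] at h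
    exact self_eq_neg.mp h.symm
  ext i j
  rw [diagonal_mul, mul_diagonal]
  rcases eq_or_ne i j with rfl | hij
  · exact mul_comm _ _
  · simp [hoff i j hij]

end UnitaryGroup

end Matrix

theorem exists_isProbabilityMeasure_isMulLeftInvariant (G : Type*) [Group G] [TopologicalSpace G]
    [IsTopologicalGroup G] [CompactSpace G] [MeasurableSpace G] [BorelSpace G] :
    ∃ ν : Measure G, IsProbabilityMeasure ν ∧ ν.IsMulLeftInvariant :=
  ⟨Measure.haarMeasure ⊤, ⟨by
    rw [← TopologicalSpace.PositiveCompacts.coe_top]; exact Measure.haarMeasure_self⟩,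
    inferInstance⟩

theorem identDistrib_of_forall_mem_orbit {G X Ω : Type*} [Group G] [MeasurableSpace G]
    [MeasurableMul G] [MeasurableInv G] [MulAction G X] [MeasurableSpace X] [MeasurableSMul₂ G X]
    [MeasurableSpace Ω] {ν : Measure G} [IsProbabilityMeasure ν] [ν.IsMulLeftInvariant]
    {μ : Measure Ω} [IsProbabilityMeasure μ] {Y : Ω → X} (hY : Measurable Y)
    (hinv : ∀ g : G, μ.map (fun ω => g • Y ω) = μ.map Y) {x₀ : X}
    (horbit : ∀ ω, Y ω ∈ MulAction.orbit G x₀) :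
    IdentDistrib Y (fun g => g⁻¹ • x₀) μ ν := by
  have hx₀ : Measurable fun g : G => g⁻¹ • x₀ := measurable_inv.smul_const x₀
  refine ⟨hY.aemeasurable, hx₀.aemeasurable, ?_⟩
  ext s hs
  have hS : MeasurableSet ((fun p : G × Ω => p.1⁻¹ • Y p.2) ⁻¹' s) :=
    (measurable_fst.inv.smul (hY.comp measurable_snd)) hs
  rw [Measure.map_apply hY hs, Measure.map_apply hx₀ hs]
  -- Average the invariance over `ν`, swap the integrals, and use the left invariance of `ν`:
  -- each `Y ω` is a translate of `x₀`.
  calc μ (Y ⁻¹' s) = ∫⁻ _, μ (Y ⁻¹' s) ∂ν := by simp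
    _ = ∫⁻ g, μ ((fun ω => g⁻¹ • Y ω) ⁻¹' s) ∂ν := lintegral_congr fun g => by
        rw [← Measure.map_apply hY hs, ← hinv g⁻¹,
          Measure.map_apply (f := fun ω => g⁻¹ • Y ω) (hY.const_smul _) hs]
    _ = ∫⁻ ω, ν ((fun g => g⁻¹ • Y ω) ⁻¹' s) ∂μ :=
        (Measure.prod_apply hS).symm.trans (Measure.prod_apply_symm hS)
    _ = ∫⁻ ω, ν ((fun g => g⁻¹ • x₀) ⁻¹' s) ∂μ := by
        refine lintegral_congr fun ω => ?_
        obtain ⟨h, hh⟩ := horbit ω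
        rw [← hh, ← measure_preimage_mul ν h⁻¹ ((fun g => g⁻¹ • x₀) ⁻¹' s)]
        congr 1
        ext g
        simp [mul_smul]
    _ = ν ((fun g => g⁻¹ • x₀) ⁻¹' s) := by simp

section MatExp

variable {Ω : Type*} [MeasurableSpace Ω] {μ : Measure Ω} {l m n : Type*}

theorem integrable_mul_const_apply [Fintype m] {F : Ω → Matrix l m ℂ}
    (hF : ∀ i j, Integrable (fun ω => F ω i j) μ) (M : Matrix m n ℂ) (i : l) (j : n) :
    Integrable (fun ω => (F ω * M) i j) μ := by
  simp only [mul_apply]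
  exact integrable_finsetSum _ fun k _ => (hF i k).mul_const _

theorem integrable_const_mul_apply [Fintype m] (M : Matrix l m ℂ) {F : Ω → Matrix m n ℂ}
    (hF : ∀ i j, Integrable (fun ω => F ω i j) μ) (i : l) (j : n) :
    Integrable (fun ω => (M * F ω) i j) μ := by
  simp only [mul_apply]
  exact integrable_finsetSum _ fun k _ => (hF k j).const_mul _

theorem matExp_add {F G : Ω → Matrix m n ℂ} (hF : ∀ i j, Integrable (fun ω => F ω i j) μ)
    (hG : ∀ i j, Integrable (fun ω => G ω i j) μ) :
    matExp μ (fun ω => F ω + G ω) = matExp μ F + matExp μ G := by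
  ext i j
  exact integral_add (hF i j) (hG i j)

theorem matExp_const [IsProbabilityMeasure μ] (M : Matrix m n ℂ) :
    matExp μ (fun _ => M) = M := by
  ext i j
  simp [matExp]

theorem matExp_mul_const [Fintype m] {F : Ω → Matrix l m ℂ}
    (hF : ∀ i j, Integrable (fun ω => F ω i j) μ) (M : Matrix m n ℂ) :
    matExp μ (fun ω => F ω * M) = matExp μ F * M := by
  ext i j
  simp only [matExp, of_apply, mul_apply]
  rw [integral_finsetSum _ fun k _ => (hF i k).mul_const _]
  simp only [integral_mul_const]

theorem matExp_const_mul [Fintype m] (M : Matrix l m ℂ) {F : Ω → Matrix m n ℂ}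
    (hF : ∀ i j, Integrable (fun ω => F ω i j) μ) :
    matExp μ (fun ω => M * F ω) = M * matExp μ F := by
  ext i j
  simp only [matExp, of_apply, mul_apply]
  rw [integral_finsetSum _ fun k _ => (hF k j).const_mul _]
  simp only [integral_const_mul]

theorem ProbabilityTheory.IdentDistrib.matExp_comp {Ω' X : Type*} [MeasurableSpace Ω']
    [MeasurableSpace X] {μ' : Measure Ω'} {Y : Ω → X} {Z : Ω' → X} (h : IdentDistrib Y Z μ μ')
    {F : X → Matrix m n ℂ} (hF : Measurable F) :
    matExp μ (fun ω => F (Y ω)) = matExp μ' (fun ω => F (Z ω)) := by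
  ext i j
  exact (h.comp (measurable_entry hF i j)).integral_eq

end MatExp

section Stiefel

open scoped ComplexOrder

variable {Ω : Type*} [MeasurableSpace Ω] {μ : Measure Ω} {n k : Type*} [Fintype n] [Fintype k]

theorem Matrix.measurable_weightedProj [DecidableEq k] (D : Matrix n n ℂ) :
    Measurable (weightedProj D : Matrix n k ℂ → Matrix n n ℂ) :=
  (measurable_id.matrix_mul (measurable_nonsing_inv.comp
    ((measurable_id.matrix_conjTranspose.matrix_mul measurable_const).matrix_mul
      measurable_id))).matrix_mul measurable_id.matrix_conjTranspose

variable [DecidableEq n]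

theorem map_smul_conjTranspose_eq {Φ : Ω → Matrix k n ℂ} (hΦ : Measurable Φ)
    (hinv : ∀ Θ ∈ unitaryGroup n ℂ, μ.map (fun ω => Φ ω * Θ) = μ.map Φ) (U : unitaryGroup n ℂ) :
    μ.map (fun ω => U • (Φ ω)ᴴ) = μ.map (fun ω => (Φ ω)ᴴ) := by
  have hct : Measurable fun A : Matrix k n ℂ => Aᴴ := measurable_id.matrix_conjTranspose
  have h := congrArg (Measure.map fun A => Aᴴ) (hinv _ (star U).2)
  rw [Measure.map_map hct (hΦ.matrix_mul measurable_const), Measure.map_map hct hΦ] at h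
  convert h using 2
  · funext ω
    simp [UnitaryGroup.smul_def, conjTranspose_mul, star_eq_conjTranspose]
  · rfl

variable [DecidableEq k]

theorem identDistrib_inv_smul_one_submatrix [IsProbabilityMeasure μ]
    {ν : Measure (unitaryGroup n ℂ)} [IsProbabilityMeasure ν] [ν.IsMulLeftInvariant]
    {Y : Ω → Matrix n k ℂ} (hY : Measurable Y) (hStiefel : ∀ ω, (Y ω)ᴴ * Y ω = 1)
    (hinv : ∀ U : unitaryGroup n ℂ, μ.map (fun ω => U • Y ω) = μ.map Y) {f : k → n}
    (hf : Function.Injective f) :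
    IdentDistrib Y (fun U : unitaryGroup n ℂ => U⁻¹ • (1 : Matrix n n ℂ).submatrix id f) μ ν :=
  identDistrib_of_forall_mem_orbit hY hinv fun ω =>
    mem_orbit_one_submatrix_of_conjTranspose_mul_self hf (hStiefel ω)

theorem commute_diagonal_matExp_weightedProj {Y : Ω → Matrix n k ℂ} (hY : Measurable Y)
    (hinv : ∀ U : unitaryGroup n ℂ, μ.map (fun ω => U • Y ω) = μ.map Y) (d : n → ℂ)
    (hint : ∀ i j, Integrable (fun ω => weightedProj (diagonal d) (Y ω) i j) μ) :
    Commute (diagonal d) (matExp μ fun ω => weightedProj (diagonal d) (Y ω)) := by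
  refine commute_diagonal_of_forall_signFlip (fun i => ?_) d
  have hR := signFlip_conjTranspose_mul_diagonal_mul i d
  set R : Matrix n n ℂ := ↑(signFlip ℂ i)
  have hRY : IdentDistrib (fun ω => signFlip ℂ i • Y ω) Y μ μ :=
    ⟨((measurable_const_smul _).comp hY).aemeasurable, hY.aemeasurable, hinv _⟩
  calc R * matExp μ (fun ω => weightedProj (diagonal d) (Y ω)) * Rᴴ
      = matExp μ (fun ω => R * weightedProj (diagonal d) (Y ω) * Rᴴ) := by
        rw [matExp_mul_const (integrable_const_mul_apply _ hint), matExp_const_mul _ hint]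
    _ = matExp μ (fun ω => weightedProj (diagonal d) (signFlip ℂ i • Y ω)) := by
        simp only [UnitaryGroup.smul_def, weightedProj_mul_left hR, R]
    _ = _ := hRY.matExp_comp (measurable_weightedProj _)

theorem matExp_weightedProj_mul_add_inv_mul_matExp_weightedProj_inv [IsProbabilityMeasure μ]
    {m : Type*} [Fintype m] [DecidableEq m] {D : Matrix n n ℂ} (hD : D.PosDef) (e : k ⊕ m ≃ n)
    {V : Ω → unitaryGroup n ℂ}
    (hint₁ : ∀ i j, Integrable (fun ω =>
      weightedProj D (V ω • (1 : Matrix n n ℂ).submatrix id (e ∘ Sum.inl)) i j) μ)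
    (hint₂ : ∀ i j, Integrable (fun ω =>
      weightedProj D⁻¹ (V ω • (1 : Matrix n n ℂ).submatrix id (e ∘ Sum.inr)) i j) μ) :
    matExp μ (fun ω => weightedProj D (V ω • (1 : Matrix n n ℂ).submatrix id (e ∘ Sum.inl))) * D +
      D⁻¹ * matExp μ (fun ω =>
        weightedProj D⁻¹ (V ω • (1 : Matrix n n ℂ).submatrix id (e ∘ Sum.inr))) = 1 := by
  rw [← matExp_mul_const hint₁, ← matExp_const_mul _ hint₂,
    ← matExp_add (integrable_mul_const_apply hint₁ D) (integrable_const_mul_apply D⁻¹ hint₂)]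
  refine (congrArg (matExp μ) (funext fun ω => ?_)).trans (matExp_const 1)
  rw [UnitaryGroup.smul_one_submatrix, UnitaryGroup.smul_one_submatrix]
  exact weightedProj_submatrix_mul_add_inv_mul_weightedProj_inv_submatrix hD (V ω).2 e

end Stiefel

theorem stmt9_general {Ω Ω' : Type*} [MeasurableSpace Ω] [MeasurableSpace Ω']
    (μ : Measure Ω) [IsProbabilityMeasure μ]
    (μ' : Measure Ω') [IsProbabilityMeasure μ']
    {L N : ℕ} (hLN : L ≤ N)
    (d : Fin N → ℝ) (hd : ∀ i, 0 < d i)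
    (Φ : Ω → Matrix (Fin L) (Fin N) ℂ) (hMeasΦ : Measurable Φ)
    (hStiefelΦ : ∀ ω, Φ ω * (Φ ω)ᴴ = 1)
    (hInvΦ : ∀ Θ ∈ Matrix.unitaryGroup (Fin N) ℂ,
      Measure.map (fun ω => Φ ω * Θ) μ = Measure.map Φ μ)
    (Ω₂ : Ω' → Matrix (Fin N) (Fin (N - L)) ℂ) (hMeasΩ₂ : Measurable Ω₂)
    (hStiefelΩ₂ : ∀ ω, (Ω₂ ω)ᴴ * Ω₂ ω = 1)
    (hInvΩ₂ : ∀ U ∈ Matrix.unitaryGroup (Fin N) ℂ,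
      Measure.map (fun ω => U * Ω₂ ω) μ' = Measure.map Ω₂ μ')
    (hint1 : ∀ i j,
      Integrable (fun ω =>
        ((Φ ω)ᴴ * (Φ ω * Matrix.diagonal (fun i => (d i : ℂ)) * (Φ ω)ᴴ)⁻¹ * Φ ω) i j) μ)
    (hint2 : ∀ i j,
      Integrable (fun ω =>
        (Ω₂ ω * ((Ω₂ ω)ᴴ * (Matrix.diagonal (fun i => (d i : ℂ)))⁻¹ * Ω₂ ω)⁻¹ * (Ω₂ ω)ᴴ) i j) μ') :
    Matrix.diagonal (fun i => (d i : ℂ)) *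
        matExp μ (fun ω =>
          (Φ ω)ᴴ * (Φ ω * Matrix.diagonal (fun i => (d i : ℂ)) * (Φ ω)ᴴ)⁻¹ * Φ ω) +
      (Matrix.diagonal (fun i => (d i : ℂ)))⁻¹ *
        matExp μ' (fun ω =>
          Ω₂ ω * ((Ω₂ ω)ᴴ * (Matrix.diagonal (fun i => (d i : ℂ)))⁻¹ * Ω₂ ω)⁻¹ * (Ω₂ ω)ᴴ)
      = 1 := by
  set D := diagonal fun i => (d i : ℂ)
  simp only [← weightedProj_conjTranspose] at hint1 ⊢
  change ∀ i j, Integrable (fun ω => weightedProj D⁻¹ (Ω₂ ω) i j) μ' at hint2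
  change _ + D⁻¹ * matExp μ' (fun ω => weightedProj D⁻¹ (Ω₂ ω)) = 1
  let e : Fin L ⊕ Fin (N - L) ≃ Fin N := finSumFinEquiv.trans (finCongr (Nat.add_sub_cancel' hLN))
  obtain ⟨ν, _, _⟩ := exists_isProbabilityMeasure_isMulLeftInvariant (unitaryGroup (Fin N) ℂ)
  have hInvΦH := map_smul_conjTranspose_eq hMeasΦ hInvΦ
  have hΦν := identDistrib_inv_smul_one_submatrix (ν := ν) hMeasΦ.matrix_conjTranspose
    (fun ω => by rw [conjTranspose_conjTranspose, hStiefelΦ]) hInvΦH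
    (e.injective.comp Sum.inl_injective)
  have hΩ₂ν := identDistrib_inv_smul_one_submatrix (ν := ν) hMeasΩ₂ hStiefelΩ₂
    (fun U => hInvΩ₂ U U.2) (e.injective.comp Sum.inr_injective)
  rw [(commute_diagonal_matExp_weightedProj hMeasΦ.matrix_conjTranspose hInvΦH _ hint1).eq,
    hΦν.matExp_comp (measurable_weightedProj D), hΩ₂ν.matExp_comp (measurable_weightedProj D⁻¹)]
  exact matExp_weightedProj_mul_add_inv_mul_matExp_weightedProj_inv
    (posDef_diagonal_ofReal hd) e
    (fun i j => (hΦν.comp (measurable_entry (measurable_weightedProj D) i j)).integrable_iff.1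
      (hint1 i j))
    (fun i j => (hΩ₂ν.comp (measurable_entry (measurable_weightedProj D⁻¹) i j)).integrable_iff.1
      (hint2 i j))

/-- The functional equation `D_N Λ_L(D_N) + D_N⁻¹ Λ_{N−L}(D_N⁻¹) = I_N`, where
`Λ_L(D) = E_Φ[Φᴴ(ΦDΦᴴ)⁻¹Φ]` for Haar `Φ` on the `L × N` Stiefel manifold and
`Λ_{N−L}(D⁻¹) = E[Ω₂(Ω₂ᴴD⁻¹Ω₂)⁻¹Ω₂ᴴ]` for Haar `Ω₂` with `N−L` orthonormal columns
(when `L = N` the second term is `0`). -/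
theorem stmt9 {Ω Ω' : Type*} [MeasurableSpace Ω] [MeasurableSpace Ω']
    (μ : Measure Ω) [IsProbabilityMeasure μ]
    (μ' : Measure Ω') [IsProbabilityMeasure μ']
    {L N : ℕ} (hL : 1 ≤ L) (hLN : L ≤ N)
    (d : Fin N → ℝ) (hd : ∀ i, 0 < d i)
    (Φ : Ω → Matrix (Fin L) (Fin N) ℂ) (hMeasΦ : Measurable Φ)
    (hStiefelΦ : ∀ ω, Φ ω * (Φ ω)ᴴ = 1)
    (hInvΦ : ∀ Θ ∈ Matrix.unitaryGroup (Fin N) ℂ,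
      Measure.map (fun ω => Φ ω * Θ) μ = Measure.map Φ μ)
    (Ω₂ : Ω' → Matrix (Fin N) (Fin (N - L)) ℂ) (hMeasΩ₂ : Measurable Ω₂)
    (hStiefelΩ₂ : ∀ ω, (Ω₂ ω)ᴴ * Ω₂ ω = 1)
    (hInvΩ₂ : ∀ U ∈ Matrix.unitaryGroup (Fin N) ℂ,
      Measure.map (fun ω => U * Ω₂ ω) μ' = Measure.map Ω₂ μ')
    (hint1 : ∀ i j,
      Integrable (fun ω =>
        ((Φ ω)ᴴ * (Φ ω * Matrix.diagonal (fun i => (d i : ℂ)) * (Φ ω)ᴴ)⁻¹ * Φ ω) i j) μ)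
    (hint2 : ∀ i j,
      Integrable (fun ω =>
        (Ω₂ ω * ((Ω₂ ω)ᴴ * (Matrix.diagonal (fun i => (d i : ℂ)))⁻¹ * Ω₂ ω)⁻¹ * (Ω₂ ω)ᴴ) i j) μ') :
    Matrix.diagonal (fun i => (d i : ℂ)) *
        matExp μ (fun ω =>
          (Φ ω)ᴴ * (Φ ω * Matrix.diagonal (fun i => (d i : ℂ)) * (Φ ω)ᴴ)⁻¹ * Φ ω) +
      (Matrix.diagonal (fun i => (d i : ℂ)))⁻¹ *
        matExp μ' (fun ω =>
          Ω₂ ω * ((Ω₂ ω)ᴴ * (Matrix.diagonal (fun i => (d i : ℂ)))⁻¹ * Ω₂ ω)⁻¹ * (Ω₂ ω)ᴴ)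
      = 1 :=
  stmt9_general μ μ' hLN d hd Φ hMeasΦ hStiefelΦ hInvΦ Ω₂ hMeasΩ₂ hStiefelΩ₂ hInvΩ₂ hint1 hint2
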